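/- Let V ⊂ ℝ be a finite nonempty set, q ∈ (2,4) and μ > 0. If 𝓔_{q,V}(μ) < 0, then there exists u ∈ H¹_μ(ℝ) with E_{q,V}(u) = 𝓔_{q,V}(μ); that is, a ground state of mass μ exists. -/

import Mathlib

/-!
A minimizing sequence is bounded in `H¹`: the Gagliardo–Nirenberg bound `‖u‖∞² ≲ ‖u‖₂ ‖u'‖₂`
makes the point terms grow like `‖u'‖₂ ^ (q / 2)` with `q / 2 < 2`, so the kinetic term
dominates. Functions bounded in `H¹` are uniformly bounded and uniformly `1/2`-Hölder, so a
subsequence converges pointwise everywhere (first on `ℚ`, then by equicontinuity), and the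
derivatives converge weakly in `L²` along it. The limit `U` has mass `m ≤ μ` by Fatou; as `V` is
finite the point terms pass to the limit, while the kinetic term is weakly lower semicontinuous,
so `E(U) ≤ 𝓔(μ) < 0` and `U ≠ 0`. Finally `β = √(μ / m) ≥ 1` multiplies the kinetic term of `U`
by `β²` and its point terms by `β ^ q ≥ β²`, so `β U` has mass `μ` and energy at most
`β² 𝓔(μ) ≤ 𝓔(μ)`.
-/


open MeasureTheory

/-- `u` is (the continuous representative of) an `H¹(ℝ)` function with weak
derivative `u'`: both `u` and `u'` are square-integrable and `u` is a
primitive of `u'`. -/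
def InH1 (u u' : ℝ → ℝ) : Prop :=
  Integrable (fun x => (u x) ^ 2) ∧ Integrable (fun x => (u' x) ^ 2) ∧
    ∀ a b : ℝ, u b - u a = ∫ x in a..b, u' x

/-- The mass `∫_ℝ u²`. -/
noncomputable def mass (u : ℝ → ℝ) : ℝ := ∫ x : ℝ, (u x) ^ 2

/-- The energy `E_{q,V}(u) = (1/2)∫ |u'|² − (1/q)∑_{v ∈ V} |u(v)|^q`,
for a set of vertices `V ⊆ ℝ`. -/
noncomputable def energy (q : ℝ) (V : Set ℝ) (u u' : ℝ → ℝ) : ℝ :=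
  (1 / 2) * (∫ x : ℝ, (u' x) ^ 2) - (1 / q) * ∑' v : V, |u (v : ℝ)| ^ q

/-- The set of energies of `H¹` functions of mass `μ`;
its infimum is the ground-state level `𝓔_{q,V}(μ)`. -/
def levelSet (q : ℝ) (V : Set ℝ) (μ : ℝ) : Set ℝ :=
  {E | ∃ u u' : ℝ → ℝ, InH1 u u' ∧ mass u = μ ∧ E = energy q V u u'}

open Filter Topology Set

theorem EquicontinuousAt.cauchySeq_of_mem_closure {X α : Type*} [TopologicalSpace X]
    [PseudoMetricSpace α] {F : ℕ → X → α} {s : Set X} {x : X} (hF : EquicontinuousAt F x)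
    (hx : x ∈ closure s) (hs : ∀ y ∈ s, CauchySeq fun n => F n y) :
    CauchySeq fun n => F n x := by
  rw [Metric.cauchySeq_iff]
  intro ε hε
  obtain ⟨y, hy, hys⟩ := mem_closure_iff_nhds.1 hx _
    (Metric.equicontinuousAt_iff_right.1 hF (ε / 3) (by positivity))
  obtain ⟨N, hN⟩ := Metric.cauchySeq_iff.1 (hs y hys) (ε / 3) (by positivity)
  refine ⟨N, fun m hm n hn => ?_⟩
  calc dist (F m x) (F n x)
      ≤ dist (F m x) (F m y) + dist (F m y) (F n y) + dist (F n y) (F n x) :=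
        dist_triangle4 _ _ _ _
    _ < ε / 3 + ε / 3 + ε / 3 := by
        gcongr
        · exact hy m
        · exact hN m hm n hn
        · rw [dist_comm]; exact hy n
    _ = ε := by ring

section WeakLimit

variable {E : Type*} [NormedAddCommGroup E] [InnerProductSpace ℝ E]

theorem exists_tendsto_inner_of_norm_le [CompleteSpace E] {w : ℕ → E} {M : ℝ}
    (hM : ∀ n, ‖w n‖ ≤ M) {S : Set E}
    (hS : ∀ φ ∈ S, ∃ l, Tendsto (fun n => inner ℝ (w n) φ) atTop (𝓝 l)) :
    ∃ g : E, (∀ φ ∈ S, Tendsto (fun n => inner ℝ (w n) φ) atTop (𝓝 (inner ℝ g φ))) ∧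
      Tendsto (fun n => inner ℝ (w n) g) atTop (𝓝 (‖g‖ ^ 2)) := by
  -- The functionals `⟪w n, ·⟫` converge on a closed subspace containing `S`; `g` is the Riesz
  -- representative of their limit on that subspace.
  have hequi : Equicontinuous fun n (φ : E) => inner ℝ (w n) φ := by
    refine Metric.equicontinuous_of_continuity_modulus (fun t => M * t) ?_ _ fun φ ψ n => ?_
    · simpa using (continuous_const_mul M).tendsto 0
    · rw [Real.dist_eq, dist_eq_norm, ← inner_sub_right]
      exact (abs_real_inner_le_norm _ _).trans
        (mul_le_mul_of_nonneg_right (hM n) (norm_nonneg _))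
  let A : Submodule ℝ E :=
    { carrier := {φ | ∃ l, Tendsto (fun n => inner ℝ (w n) φ) atTop (𝓝 l)}
      add_mem' := fun ⟨l₁, h₁⟩ ⟨l₂, h₂⟩ =>
        ⟨l₁ + l₂, by simpa only [inner_add_right] using h₁.add h₂⟩
      zero_mem' := ⟨0, by simp⟩
      smul_mem' := fun c φ ⟨l, h⟩ =>
        ⟨c * l, by simpa only [real_inner_smul_right] using h.const_mul c⟩ }
  have hA : IsClosed (A : Set E) := closure_subset_iff_isClosed.1 fun φ hφ =>
    cauchySeq_tendsto_of_complete
      ((hequi φ).cauchySeq_of_mem_closure hφ fun _ ⟨_, hl⟩ => hl.cauchySeq)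
  have : CompleteSpace A := hA.completeSpace_coe
  choose T hT using fun φ : A => φ.2
  let Tc : A →L[ℝ] ℝ := continuousLinearMapOfTendsto
    (fun n => (innerSL ℝ (w n)).comp A.subtypeL) (tendsto_pi_nhds.2 hT)
  let g : A := (InnerProductSpace.toDual ℝ A).symm Tc
  have hg : ∀ φ : A,
      Tendsto (fun n => inner ℝ (w n) (φ : E)) atTop (𝓝 (inner ℝ (g : E) φ)) := by
    intro φ
    rw [← Submodule.coe_inner, InnerProductSpace.toDual_symm_apply]
    exact hT φ
  refine ⟨g, fun φ hφ => hg ⟨φ, hS φ hφ⟩, ?_⟩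
  simpa only [real_inner_self_eq_norm_sq] using hg g

theorem norm_le_of_tendsto_inner {w : ℕ → E} {g : E} {c : ℝ}
    (hg : Tendsto (fun n => inner ℝ (w n) g) atTop (𝓝 (‖g‖ ^ 2)))
    (hw : Tendsto (fun n => ‖w n‖) atTop (𝓝 c)) : ‖g‖ ≤ c := by
  have hc : 0 ≤ c := ge_of_tendsto' hw fun n => norm_nonneg _
  have : ‖g‖ ^ 2 ≤ c * ‖g‖ :=
    le_of_tendsto_of_tendsto' hg (hw.mul_const _) fun n => real_inner_le_norm _ _
  nlinarith [norm_nonneg g]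

end WeakLimit

noncomputable def indicatorIocL2 (a b : ℝ) : Lp ℝ 2 (volume : Measure ℝ) :=
  indicatorConstLp 2 (measurableSet_Ioc (a := a) (b := b)) (by simp [Real.volume_Ioc]) (1 : ℝ)

theorem inner_indicatorIocL2 (a b : ℝ) (w : Lp ℝ 2 (volume : Measure ℝ)) :
    inner ℝ (indicatorIocL2 a b) w = ∫ x in Ioc a b, w x :=
  L2.inner_indicatorConstLp_one _ _ w

theorem norm_indicatorIocL2 {a b : ℝ} (hab : a ≤ b) : ‖indicatorIocL2 a b‖ = √(b - a) := by
  rw [indicatorIocL2, norm_indicatorConstLp two_ne_zero ENNReal.ofNat_ne_top, Real.sqrt_eq_rpow]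
  simp [hab]

theorem MeasureTheory.L2.norm_sq_eq_integral_sq {α : Type*} [MeasurableSpace α] {μ : Measure α}
    (f : Lp ℝ 2 μ) : ‖f‖ ^ 2 = ∫ x, f x ^ 2 ∂μ := by
  rw [← real_inner_self_eq_norm_sq, L2.inner_def]
  simp [sq]

theorem MeasureTheory.MemLp.norm_toLp_sq {α : Type*} [MeasurableSpace α] {μ : Measure α}
    {f : α → ℝ} (hf : MemLp f 2 μ) : ‖hf.toLp f‖ ^ 2 = ∫ x, f x ^ 2 ∂μ := by
  rw [L2.norm_sq_eq_integral_sq]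
  exact integral_congr_ae (hf.coeFn_toLp.mono fun x hx => by simp only [hx])

section Primitive

variable {u u' : ℝ → ℝ} (hu' : MemLp u' 2 volume)
  (hftc : ∀ a b, u b - u a = ∫ x in a..b, u' x)
include hu' hftc

theorem sub_eq_inner_indicatorIocL2 {a b : ℝ} (hab : a ≤ b) :
    u b - u a = inner ℝ (indicatorIocL2 a b) (hu'.toLp u') := by
  rw [inner_indicatorIocL2, hftc, intervalIntegral.integral_of_le hab]
  exact setIntegral_congr_ae measurableSet_Ioc
    (hu'.coeFn_toLp.mono fun x hx _ => hx.symm)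

theorem abs_sub_le_sqrt_mul_sqrt (x y : ℝ) :
    |u x - u y| ≤ √(∫ t, u' t ^ 2) * √|x - y| := by
  wlog hyx : y ≤ x generalizing x y
  · rw [abs_sub_comm, abs_sub_comm x]
    exact this y x (le_of_not_ge hyx)
  rw [sub_eq_inner_indicatorIocL2 hu' hftc hyx, abs_of_nonneg (sub_nonneg.2 hyx),
    ← hu'.norm_toLp_sq, Real.sqrt_sq (norm_nonneg _), mul_comm, ← norm_indicatorIocL2 hyx]
  exact abs_real_inner_le_norm _ _

end Primitive

theorem sq_le_of_abs_sub_le {u : ℝ → ℝ} {L r : ℝ} (hu : Integrable (fun x => u x ^ 2))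
    (hL : ∀ x y, |u x - u y| ≤ L * √|x - y|) (hr : 0 < r) (x : ℝ) :
    u x ^ 2 ≤ (∫ y, u y ^ 2) / r + 2 * r * L ^ 2 := by
  have hL0 : 0 ≤ L := by simpa using (abs_nonneg _).trans (hL 1 0)
  set s := |u x| - L * √r
  have hux : u x ^ 2 ≤ 2 * max s 0 ^ 2 + 2 * r * L ^ 2 := by
    have : |u x| ≤ max s 0 + L * √r := by linarith [le_max_left s 0]
    have h2 := pow_le_pow_left₀ (abs_nonneg _) this 2
    rw [sq_abs] at h2
    nlinarith [Real.sq_sqrt hr.le, sq_nonneg (max s 0 - L * √r)]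
  suffices h : 2 * r * max s 0 ^ 2 ≤ ∫ y, u y ^ 2 by
    have : 2 * max s 0 ^ 2 ≤ (∫ y, u y ^ 2) / r := by
      rw [le_div_iff₀ hr]; linarith
    linarith
  rcases le_total s 0 with hs | hs
  · rw [max_eq_right hs]; simpa using integral_nonneg fun y => sq_nonneg (u y)
  rw [max_eq_left hs]
  have hnear : ∀ y ∈ Icc (x - r) (x + r), s ^ 2 ≤ u y ^ 2 := by
    intro y hy
    have hxy : |x - y| ≤ r := abs_le.2 ⟨by linarith [hy.2], by linarith [hy.1]⟩
    have : L * √|x - y| ≤ L * √r := by gcongr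
    have : s ≤ |u y| := by
      linarith [abs_sub_abs_le_abs_sub (u x) (u y), hL x y]
    rw [← sq_abs (u y)]
    exact pow_le_pow_left₀ hs this 2
  calc 2 * r * s ^ 2 = s ^ 2 * volume.real (Icc (x - r) (x + r)) := by
        rw [Real.volume_real_Icc_of_le (by linarith)]; ring
    _ ≤ ∫ y in Icc (x - r) (x + r), u y ^ 2 :=
        setIntegral_ge_of_const_le_real measurableSet_Icc (by simp) hnear hu.integrableOn
    _ ≤ ∫ y, u y ^ 2 :=
        setIntegral_le_integral hu (Eventually.of_forall fun y => sq_nonneg _)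

theorem continuous_of_forall_sub_eq_intervalIntegral {u u' : ℝ → ℝ}
    (hu' : LocallyIntegrable u') (hftc : ∀ a b, u b - u a = ∫ x in a..b, u' x) :
    Continuous u := by
  have : u = fun b => u 0 + ∫ x in (0 : ℝ)..b, u' x := funext fun b => by linarith [hftc 0 b]
  rw [this]
  exact continuous_const.add (intervalIntegral.continuous_primitive
    (fun a b => (hu'.integrableOn_isCompact isCompact_uIcc).intervalIntegrable) 0)

namespace InH1

variable {u u' : ℝ → ℝ}

-- `InH1` does not ask `u'` to be measurable; positive mass forces it.
theorem locallyIntegrable (h : InH1 u u') (hm : mass u ≠ 0) : LocallyIntegrable u' := by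
  by_contra hli
  obtain ⟨x₀, hx₀⟩ : ∃ x₀, ¬ IntegrableAtFilter u' (𝓝 x₀) := by
    simpa [LocallyIntegrable] using hli
  -- Across a non-integrable singularity the interval integral takes its junk value `0`.
  have hflat : ∀ a b, a < x₀ → x₀ < b → u b = u a := fun a b ha hb => by
    have hab : ¬ IntervalIntegrable u' volume a b := fun hab =>
      hx₀ ⟨Ioc a b, Ioc_mem_nhds ha hb, hab.1⟩
    linarith [h.2.2 a b, intervalIntegral.integral_undef hab]
  set c := u (x₀ + 1)
  have hconst : ∀ y ≠ x₀, u y = c := by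
    intro y hy
    rcases hy.lt_or_gt with hlt | hgt
    · exact (hflat y (x₀ + 1) hlt (by linarith)).symm
    · rw [hflat (x₀ - 1) y (by linarith) hgt,
        ← hflat (x₀ - 1) (x₀ + 1) (by linarith) (by linarith)]
  have hae : (fun x => u x ^ 2) =ᵐ[volume] fun _ => c ^ 2 := by
    filter_upwards [compl_mem_ae_iff.2 (measure_singleton x₀)] with y hy
    rw [hconst y hy]
  have hc : c ^ 2 = 0 := by
    refine (integrable_const_iff.1 ((integrable_congr hae).1 h.1)).resolve_right fun hfin => ?_
    simpa [Real.volume_univ] using hfin.measure_univ_lt_top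
  exact hm (by rw [mass, integral_congr_ae hae, hc, integral_zero])

theorem memLp_two (h : InH1 u u') (hm : mass u ≠ 0) : MemLp u' 2 volume :=
  (memLp_two_iff_integrable_sq (h.locallyIntegrable hm).aestronglyMeasurable).2 h.2.1

theorem const_mul (h : InH1 u u') (c : ℝ) : InH1 (fun x => c * u x) (fun x => c * u' x) := by
  refine ⟨?_, ?_, fun a b => ?_⟩
  · simpa [mul_pow] using h.1.const_mul (c ^ 2)
  · simpa [mul_pow] using h.2.1.const_mul (c ^ 2)
  · rw [intervalIntegral.integral_const_mul, ← h.2.2 a b]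
    ring

end InH1

theorem mass_const_mul (u : ℝ → ℝ) (c : ℝ) : mass (fun x => c * u x) = c ^ 2 * mass u := by
  simp only [mass, mul_pow, integral_const_mul]

theorem energy_const_mul_le {q c : ℝ} (hq : 2 ≤ q) (hc : 1 ≤ c) (V : Set ℝ) (u u' : ℝ → ℝ) :
    energy q V (fun x => c * u x) (fun x => c * u' x) ≤ c ^ 2 * energy q V u u' := by
  have hN : ∑' v : V, |c * u v| ^ q = c ^ q * ∑' v : V, |u v| ^ q := by
    simp only [abs_mul, abs_of_pos (zero_lt_one.trans_le hc),
      Real.mul_rpow (zero_le_one.trans hc) (abs_nonneg _), tsum_mul_left]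
  have hcq : c ^ (2 : ℝ) ≤ c ^ q := Real.rpow_le_rpow_of_exponent_le hc hq
  rw [Real.rpow_two] at hcq
  have hN0 : 0 ≤ ∑' v : V, |u v| ^ q := tsum_nonneg fun v => by positivity
  have hq0 : 0 ≤ 1 / q := by positivity
  simp only [energy, hN, mul_pow, integral_const_mul]
  nlinarith [mul_le_mul_of_nonneg_right hcq (mul_nonneg hq0 hN0)]

theorem exists_rpow_le_mul_add {θ ε : ℝ} (hθ0 : 0 ≤ θ) (hθ1 : θ < 1) (hε : 0 < ε) :
    ∃ C, ∀ x : ℝ, 0 ≤ x → x ^ θ ≤ ε * x + C := by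
  -- Beyond `R`, where `R ^ (θ - 1) = ε`, the power is dominated by the linear term.
  set R := ε ^ (1 / (θ - 1))
  have hR : 0 < R := Real.rpow_pos_of_pos hε _
  have hRε : R ^ (θ - 1) = ε := by
    rw [← Real.rpow_mul hε.le, one_div_mul_cancel (by linarith), Real.rpow_one]
  refine ⟨R ^ θ, fun x hx => ?_⟩
  rcases le_total x R with hxR | hRx
  · have := Real.rpow_le_rpow hx hxR hθ0
    nlinarith
  · have hx0 : 0 < x := hR.trans_le hRx
    have hpow : x ^ θ = x ^ (θ - 1) * x := by
      rw [← Real.rpow_add_one hx0.ne']; ring_nf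
    have := Real.rpow_le_rpow_of_nonpos hR hRx (by linarith : θ - 1 ≤ 0)
    have : 0 ≤ R ^ θ := by positivity
    rw [hpow]
    nlinarith

theorem exists_energy_ge {V : Set ℝ} (hV : V.Finite) {q μ : ℝ} (hq : 0 ≤ q) (hq' : q < 4)
    (hμ : 0 < μ) :
    ∃ C, ∀ u u' : ℝ → ℝ, InH1 u u' → mass u = μ →
      (∫ x, u' x ^ 2) / 4 - C ≤ energy q V u u' := by
  have := hV.fintype
  set c := Fintype.card V * (μ + 2) ^ (q / 2) / q
  have hc : 0 ≤ c := by positivity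
  obtain ⟨C, hC⟩ := exists_rpow_le_mul_add (θ := q / 4) (by positivity) (by linarith)
    (show (0 : ℝ) < 1 / (4 * (c + 1)) by positivity)
  refine ⟨1 / 4 + c * C, fun u u' h hmass => ?_⟩
  set K := ∫ x, u' x ^ 2
  have hK : 0 ≤ K := integral_nonneg fun x => sq_nonneg _
  set s := √(K + 1)
  have hs : 0 < s := Real.sqrt_pos.2 (by linarith)
  -- The Gagliardo–Nirenberg inequality `‖u‖∞² ≲ ‖u‖₂ ‖u'‖₂`, from the choice `r = 1 / s`.
  have hsup : ∀ x, u x ^ 2 ≤ (μ + 2) * s := by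
    intro x
    have hL := abs_sub_le_sqrt_mul_sqrt (h.memLp_two (by rw [hmass]; exact hμ.ne')) h.2.2
    have := sq_le_of_abs_sub_le h.1 hL (one_div_pos.2 hs) x
    rw [Real.sq_sqrt hK, ← mass, hmass, div_div_eq_mul_div, div_one] at this
    have hKs : 2 * (1 / s) * K ≤ 2 * s := by
      rw [mul_assoc, mul_le_mul_iff_right₀ two_pos, one_div_mul_eq_div, div_le_iff₀ hs,
        Real.mul_self_sqrt (by linarith)]
      linarith
    nlinarith
  have hterm : ∀ x, |u x| ^ q ≤ (μ + 2) ^ (q / 2) * (K + 1) ^ (q / 4) := by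
    intro x
    calc |u x| ^ q ≤ (((μ + 2) * s) ^ (1 / 2 : ℝ)) ^ q := by
          rw [← Real.sqrt_eq_rpow]
          exact Real.rpow_le_rpow (abs_nonneg _) (Real.abs_le_sqrt (hsup x)) hq
      _ = (μ + 2) ^ (q / 2) * (K + 1) ^ (q / 4) := by
          rw [← Real.rpow_mul (by positivity), Real.mul_rpow (by linarith) hs.le,
            show s = (K + 1) ^ (1 / 2 : ℝ) from Real.sqrt_eq_rpow _, ← Real.rpow_mul (by linarith)]
          ring_nf
  have hN : (1 / q) * ∑' v : V, |u v| ^ q ≤ c * (K + 1) ^ (q / 4) := by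
    rw [tsum_fintype]
    calc (1 / q) * ∑ v : V, |u v| ^ q
        ≤ (1 / q) * ∑ _v : V, (μ + 2) ^ (q / 2) * (K + 1) ^ (q / 4) := by
          gcongr with v; exact hterm v
      _ = c * (K + 1) ^ (q / 4) := by
          rw [Finset.sum_const, Finset.card_univ, nsmul_eq_mul]; ring
  have hY := mul_le_mul_of_nonneg_left (hC (K + 1) (by linarith)) hc
  have hcε : c * (1 / (4 * (c + 1))) ≤ 1 / 4 := by
    rw [mul_one_div, div_le_div_iff₀ (by positivity) (by norm_num)]; linarith
  simp only [energy]
  nlinarith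

theorem exists_subseq_tendsto_of_abs_sub_le (f : ℕ → ℝ → ℝ) {M L : ℝ}
    (hM : ∀ n x, |f n x| ≤ M) (hL : ∀ n x y, |f n x - f n y| ≤ L * √|x - y|) :
    ∃ φ : ℕ → ℕ, StrictMono φ ∧ ∃ U : ℝ → ℝ, ∀ x, Tendsto (fun n => f (φ n) x) atTop (𝓝 (U x)) := by
  obtain ⟨G, -, φ, hφ, hG⟩ := (isCompact_univ_pi fun _ : ℚ => isCompact_Icc).tendsto_subseq
    (x := fun n (r : ℚ) => f n r) fun n r _ => abs_le.1 (hM n r)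
  have hequi : Equicontinuous fun n => f (φ n) := by
    refine Metric.equicontinuous_of_continuity_modulus (fun t => L * √t) ?_ _ fun x y n => hL _ x y
    have : Continuous fun t : ℝ => L * √t := by fun_prop
    simpa using this.tendsto 0
  have hcauchy : ∀ x, CauchySeq fun n => f (φ n) x := fun x =>
    (hequi x).cauchySeq_of_mem_closure (s := range ((↑) : ℚ → ℝ))
      (by rw [Rat.denseRange_cast.closure_range]; trivial)
      (by rintro _ ⟨r, rfl⟩; exact (tendsto_pi_nhds.1 hG r).cauchySeq)
  choose U hU using fun x => cauchySeq_tendsto_of_complete (hcauchy x)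
  exact ⟨φ, hφ, U, hU⟩

theorem integrable_and_integral_le_of_tendsto {α : Type*} [MeasurableSpace α] {μ : Measure α}
    {f : ℕ → α → ℝ} {F : α → ℝ} {c : ℝ} (hf : ∀ n, Integrable (f n) μ)
    (hf0 : ∀ n x, 0 ≤ f n x) (hF : ∀ x, Tendsto (fun n => f n x) atTop (𝓝 (F x)))
    (hc : ∀ n, ∫ x, f n x ∂μ ≤ c) :
    Integrable F μ ∧ ∫ x, F x ∂μ ≤ c := by
  have hF0 : ∀ x, 0 ≤ F x := fun x => ge_of_tendsto' (hF x) fun n => hf0 n x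
  have hFm : AEStronglyMeasurable F μ :=
    aestronglyMeasurable_of_tendsto_ae atTop (fun n => (hf n).1) (ae_of_all _ hF)
  have hlint : ∫⁻ x, ENNReal.ofReal (F x) ∂μ ≤ ENNReal.ofReal c := calc
    ∫⁻ x, ENNReal.ofReal (F x) ∂μ = ∫⁻ x, liminf (fun n => ENNReal.ofReal (f n x)) atTop ∂μ :=
        lintegral_congr fun x =>
          ((ENNReal.continuous_ofReal.tendsto _).comp (hF x)).liminf_eq.symm
    _ ≤ liminf (fun n => ∫⁻ x, ENNReal.ofReal (f n x) ∂μ) atTop :=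
        lintegral_liminf_le' fun n => (hf n).1.aemeasurable.ennreal_ofReal
    _ ≤ ENNReal.ofReal c := liminf_le_of_frequently_le' <| Frequently.of_forall fun n => by
        rw [← ofReal_integral_eq_lintegral_ofReal (hf n) (ae_of_all _ (hf0 n))]
        exact ENNReal.ofReal_le_ofReal (hc n)
  refine ⟨⟨hFm, (hasFiniteIntegral_iff_ofReal (ae_of_all _ hF0)).2
    (hlint.trans_lt ENNReal.ofReal_lt_top)⟩, ?_⟩
  rw [integral_eq_lintegral_of_nonneg_ae (ae_of_all _ hF0) hFm]
  exact ENNReal.toReal_le_of_le_ofReal ((integral_nonneg (hf0 0)).trans (hc 0)) hlint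

theorem exists_primitive_of_tendsto {u u' : ℕ → ℝ → ℝ} {U : ℝ → ℝ} {κ : ℝ}
    (hu' : ∀ n, MemLp (u' n) 2 volume)
    (hftc : ∀ n a b, u n b - u n a = ∫ x in a..b, u' n x)
    (hU : ∀ x, Tendsto (fun n => u n x) atTop (𝓝 (U x)))
    (hK : Tendsto (fun n => ∫ x, u' n x ^ 2) atTop (𝓝 κ)) :
    ∃ g : ℝ → ℝ, MemLp g 2 volume ∧ (∀ a b, U b - U a = ∫ x in a..b, g x) ∧
      ∫ x, g x ^ 2 ≤ κ := by
  set w := fun n => (hu' n).toLp (u' n)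
  have hw : Tendsto (fun n => ‖w n‖) atTop (𝓝 √κ) := by
    refine ((Real.continuous_sqrt.tendsto κ).comp hK).congr fun n => ?_
    simp only [Function.comp, w, ← (hu' n).norm_toLp_sq, Real.sqrt_sq (norm_nonneg _)]
  obtain ⟨M, hM⟩ := hw.bddAbove_range
  have hind : ∀ a b, a ≤ b →
      Tendsto (fun n => inner ℝ (w n) (indicatorIocL2 a b)) atTop (𝓝 (U b - U a)) := by
    intro a b hab
    refine ((hU b).sub (hU a)).congr fun n => ?_
    rw [sub_eq_inner_indicatorIocL2 (hu' n) (hftc n) hab, real_inner_comm]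
  obtain ⟨g, hgind, hgg⟩ := exists_tendsto_inner_of_norm_le (w := w)
    (fun n => hM (mem_range_self n)) (S := {φ | ∃ a b, a ≤ b ∧ indicatorIocL2 a b = φ})
    (by rintro _ ⟨a, b, hab, rfl⟩; exact ⟨_, hind a b hab⟩)
  have hftc_le : ∀ a b, a ≤ b → U b - U a = ∫ x in a..b, g x := by
    intro a b hab
    rw [tendsto_nhds_unique (hind a b hab) (hgind _ ⟨a, b, hab, rfl⟩), real_inner_comm,
      inner_indicatorIocL2, intervalIntegral.integral_of_le hab]
  refine ⟨g, Lp.memLp g, fun a b => ?_, ?_⟩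
  · rcases le_total a b with hab | hba
    · exact hftc_le a b hab
    · rw [intervalIntegral.integral_symm, ← hftc_le b a hba]; ring
  · have hκ : 0 ≤ κ := ge_of_tendsto' hK fun n => integral_nonneg fun x => sq_nonneg _
    rw [← L2.norm_sq_eq_integral_sq, ← Real.le_sqrt (norm_nonneg _) hκ]
    exact norm_le_of_tendsto_inner hgg hw

theorem exists_inH1_energy_le_of_tendsto {V : Set ℝ} (hV : V.Finite) {q μ B E : ℝ}
    (hq : 0 ≤ q) (hμ : 0 < μ) {u u' : ℕ → ℝ → ℝ} (hu : ∀ n, InH1 (u n) (u' n))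
    (hmass : ∀ n, mass (u n) = μ) (hB : ∀ n, ∫ x, u' n x ^ 2 ≤ B)
    (hE : Tendsto (fun n => energy q V (u n) (u' n)) atTop (𝓝 E)) :
    ∃ U g : ℝ → ℝ, InH1 U g ∧ Continuous U ∧ mass U ≤ μ ∧ energy q V U g ≤ E := by
  have hu' : ∀ n, MemLp (u' n) 2 volume := fun n =>
    (hu n).memLp_two (by rw [hmass n]; exact hμ.ne')
  have hB0 : 0 ≤ B := (integral_nonneg fun x => sq_nonneg _).trans (hB 0)
  have hL : ∀ n x y, |u n x - u n y| ≤ √B * √|x - y| := fun n x y =>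
    (abs_sub_le_sqrt_mul_sqrt (hu' n) (hu n).2.2 x y).trans (by gcongr; exact hB n)
  have hM : ∀ n x, |u n x| ≤ √(μ + 2 * B) := fun n x => Real.abs_le_sqrt <| by
    have := sq_le_of_abs_sub_le (hu n).1 (hL n) one_pos x
    rwa [← mass, hmass n, div_one, Real.sq_sqrt hB0, mul_one] at this
  obtain ⟨φ, hφ, U, hU⟩ := exists_subseq_tendsto_of_abs_sub_le u hM hL
  have hN : Tendsto (fun n => ∑' v : V, |u (φ n) v| ^ q) atTop (𝓝 (∑' v : V, |U v| ^ q)) := by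
    have := hV.fintype
    simp only [tsum_fintype]
    exact tendsto_finsetSum _ fun v _ => (hU v).abs.rpow_const (Or.inr hq)
  -- The kinetic energies converge because the energies and the point terms do.
  have hK : Tendsto (fun n => ∫ x, u' (φ n) x ^ 2) atTop
      (𝓝 (2 * (E + 1 / q * ∑' v : V, |U v| ^ q))) := by
    refine (((hE.comp hφ.tendsto_atTop).add (hN.const_mul (1 / q))).const_mul 2).congr
      fun n => ?_
    simp only [Function.comp, energy]
    ring
  obtain ⟨g, hg, hUg, hgK⟩ :=
    exists_primitive_of_tendsto (fun n => hu' (φ n)) (fun n => (hu (φ n)).2.2) hU hK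
  obtain ⟨hU2, hUμ⟩ := integrable_and_integral_le_of_tendsto (fun n => (hu (φ n)).1)
    (fun n x => sq_nonneg _) (fun x => (hU x).pow 2) (fun n => (hmass (φ n)).le)
  refine ⟨U, g, ⟨hU2, (memLp_two_iff_integrable_sq hg.1).1 hg, hUg⟩,
    continuous_of_forall_sub_eq_intervalIntegral (hg.locallyIntegrable one_le_two) hUg, hUμ, ?_⟩
  simp only [energy]
  linarith

theorem InH1.mass_pos_of_energy_neg {q : ℝ} {V : Set ℝ} {u u' : ℝ → ℝ} (h : InH1 u u')
    (hc : Continuous u) (hE : energy q V u u' < 0) : 0 < mass u := by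
  refine (integral_nonneg fun x => sq_nonneg (u x)).lt_of_ne fun h0 => hE.not_ge ?_
  have hae := (integral_eq_zero_iff_of_nonneg (fun x => sq_nonneg (u x)) h.1).1 h0.symm
  have hu : ∀ x, u x = 0 := fun x => pow_eq_zero_iff two_ne_zero |>.1 <|
    congrFun (((hc.pow 2).ae_eq_iff_eq volume continuous_const).1 hae) x
  have hK : 0 ≤ ∫ x, u' x ^ 2 := integral_nonneg fun x => sq_nonneg _
  rcases eq_or_ne q 0 with rfl | hq
  · simp only [energy, div_zero, zero_mul, sub_zero]; positivity
  · simp only [energy, hu, abs_zero, Real.zero_rpow hq, tsum_zero, mul_zero, sub_zero]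
    positivity

theorem stmt3_general (V : Set ℝ) (hfin : V.Finite) (q μ : ℝ)
    (hq : 2 < q) (hq' : q < 4) (hμ : 0 < μ) (hneg : sInf (levelSet q V μ) < 0) :
    ∃ u u' : ℝ → ℝ, InH1 u u' ∧ mass u = μ ∧
      energy q V u u' = sInf (levelSet q V μ) := by
  obtain ⟨C, hC⟩ := exists_energy_ge hfin (by linarith : 0 ≤ q) hq' hμ
  have hnonempty : (levelSet q V μ).Nonempty :=
    nonempty_iff_ne_empty.2 fun h => by simp [h] at hneg
  have hbdd : BddBelow (levelSet q V μ) := ⟨-C, by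
    rintro _ ⟨u, u', h, hm, rfl⟩
    have : 0 ≤ ∫ x, u' x ^ 2 := integral_nonneg fun x => sq_nonneg _
    linarith [hC u u' h hm]⟩
  obtain ⟨e, he_anti, he, he_mem⟩ := exists_seq_tendsto_sInf hnonempty hbdd
  choose u u' hu hmass he_eq using he_mem
  obtain ⟨U, g, hUg, hUc, hUμ, hUE⟩ := exists_inH1_energy_le_of_tendsto hfin (q := q)
    (by linarith) hμ hu hmass (B := 4 * (e 0 + C)) (fun n => by
      have : 0 ≤ ∫ x, u' n x ^ 2 := integral_nonneg fun x => sq_nonneg _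
      linarith [hC _ _ (hu n) (hmass n), he_eq n, he_anti (Nat.zero_le n)])
    (he.congr he_eq)
  have hm := hUg.mass_pos_of_energy_neg hUc (hUE.trans_lt hneg)
  -- Rescaling to mass `μ` costs no energy since `q > 2` and the level is negative.
  set β := √(μ / mass U)
  have hβ : 1 ≤ β := Real.one_le_sqrt.2 ((one_le_div hm).2 hUμ)
  have hβU : mass (fun x => β * U x) = μ := by
    rw [mass_const_mul, Real.sq_sqrt (by positivity), div_mul_cancel₀ _ hm.ne']
  refine ⟨_, _, hUg.const_mul β, hβU,
    le_antisymm ?_ (csInf_le hbdd ⟨_, _, hUg.const_mul β, hβU, rfl⟩)⟩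
  calc energy q V (fun x => β * U x) (fun x => β * g x)
      ≤ β ^ 2 * energy q V U g := energy_const_mul_le hq.le hβ V U g
    _ ≤ β ^ 2 * sInf (levelSet q V μ) := by gcongr
    _ ≤ sInf (levelSet q V μ) := by nlinarith [one_le_pow₀ (n := 2) hβ]

/-- If `V ⊂ ℝ` is finite and nonempty, `q ∈ (2,4)`, `μ > 0` and
`𝓔_{q,V}(μ) < 0`, then a ground state of mass `μ` exists. -/
theorem stmt3 (V : Set ℝ) (hfin : V.Finite) (hne : V.Nonempty) (q μ : ℝ)
    (hq : 2 < q) (hq' : q < 4) (hμ : 0 < μ) (hneg : sInf (levelSet q V μ) < 0) :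
    ∃ u u' : ℝ → ℝ, InH1 u u' ∧ mass u = μ ∧
      energy q V u u' = sInf (levelSet q V μ) :=
  stmt3_general V hfin q μ hq hq' hμ hneg
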